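/- For every integer k ≥ 1, the identity x_k = (1/(k(k+1)(k+2)))·∑_{s=1}^k s(s+1)·c(1,s) + (2/(k(k+1)(k+2)))·∑_{l=2}^∞ l·(∑_{s=1}^k (s+1)·c(l,s)) − (1/k)·∑_{l=2}^∞ l·c(l,k) holds, where x_k = ∑_{l=2}^∞ c(l,k) and all series involved converge. -/

import Mathlib

/-!
Geometric decay, `c(l+1,k) ≤ 3^k (3/4)^l`, makes every series converge. Clearing the denominator
of the recurrence and summing over `l ≥ 2` gives, for `X_k = ∑_{l≥2} c(l,k)` and
`Y_k = ∑_{l≥2} l c(l,k)`,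
`Y_{k+1} + (k+3) X_{k+1} = k X_k + Y_k + c(1,k+1)`,
where `c(1,k+1)` is the `l = 1` term produced by the shift `l ↦ l - 1` in the second summand.
Multiplied by `(k+1)(k+2)` this telescopes to
`k(k+1)(k+2) X_k + (k+1)(k+2) Y_k = ∑_{s=1}^k (s(s+1) c(1,s) + 2(s+1) Y_s)`,
which is the identity after division by `k(k+1)(k+2)`.
-/

open scoped Classical

/-- The constants `c(l,k)`: `c(l,0) = c(0,k) = 0`,
`c(1,k) = (2k²+14k)/((k+1)(k+2)(k+3)(k+4))` for `k ≥ 1`, and for `l > 1`, `k > 0`,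
`c(l,k) = c(l,k-1)·(l+k-1)/(2l+k+2) + c(l-1,k)·(l-1)/(2l+k+2)`. -/
noncomputable def c : ℕ → ℕ → ℝ
  | _, 0 => 0
  | 0, _ => 0
  | 1, k + 1 =>
      (2 * ((k : ℝ) + 1) ^ 2 + 14 * ((k : ℝ) + 1)) /
        (((k : ℝ) + 2) * ((k : ℝ) + 3) * ((k : ℝ) + 4) * ((k : ℝ) + 5))
  | l + 2, k + 1 =>
      c (l + 2) k * ((l : ℝ) + (k : ℝ) + 2) / (2 * (l : ℝ) + (k : ℝ) + 7) +
      c (l + 1) (k + 1) * ((l : ℝ) + 1) / (2 * (l : ℝ) + (k : ℝ) + 7)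
termination_by l k => (l, k)

lemma c_zero_right (l : ℕ) : c l 0 = 0 := by
  cases l <;> simp [c]

lemma c_one_succ (k : ℕ) : c 1 (k + 1) =
    (2 * ((k : ℝ) + 1) ^ 2 + 14 * ((k : ℝ) + 1)) /
      (((k : ℝ) + 2) * ((k : ℝ) + 3) * ((k : ℝ) + 4) * ((k : ℝ) + 5)) := by
  simp [c]

lemma mul_c_add_two_succ (l k : ℕ) :
    (2 * (l : ℝ) + k + 7) * c (l + 2) (k + 1) =
      ((l : ℝ) + k + 2) * c (l + 2) k + ((l : ℝ) + 1) * c (l + 1) (k + 1) := by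
  rw [c]
  field_simp

lemma c_nonneg (l k : ℕ) : 0 ≤ c l k := by
  induction l, k using c.induct with
  | case1 l => rw [c_zero_right]
  | case2 k _ => cases k <;> simp [c]
  | case3 k => rw [c_one_succ]; positivity
  | case4 l k ih₁ ih₂ =>
    refine nonneg_of_mul_nonneg_right (a := 2 * (l : ℝ) + k + 7) ?_ (by positivity)
    rw [mul_c_add_two_succ]
    positivity

lemma c_one_succ_le_one (k : ℕ) : c 1 (k + 1) ≤ 1 := by
  rw [c_one_succ, div_le_one (by positivity)]
  nlinarith [sq_nonneg ((k : ℝ) ^ 2)]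

lemma c_succ_le (k l : ℕ) : c (l + 1) k ≤ 3 ^ k * (3 / 4) ^ l := by
  induction k generalizing l with
  | zero => rw [c_zero_right]; positivity
  | succ k ihk =>
    induction l with
    | zero => simpa using (c_one_succ_le_one k).trans (one_le_pow₀ (by norm_num))
    | succ l ihl =>
      have hD : (0 : ℝ) < 2 * l + k + 7 := by positivity
      have hB : (0 : ℝ) ≤ 3 ^ k * (3 / 4) ^ l := by positivity
      refine le_of_mul_le_mul_left ?_ hD
      rw [mul_c_add_two_succ]
      calc ((l : ℝ) + k + 2) * c (l + 2) k + ((l : ℝ) + 1) * c (l + 1) (k + 1)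
          ≤ ((l : ℝ) + k + 2) * (3 ^ k * (3 / 4) ^ (l + 1)) +
              ((l : ℝ) + 1) * (3 ^ (k + 1) * (3 / 4) ^ l) := by
            gcongr
            exact ihk (l + 1)
        _ ≤ (2 * (l : ℝ) + k + 7) * (3 ^ (k + 1) * (3 / 4) ^ (l + 1)) := by
            rw [pow_succ, pow_succ]
            nlinarith [mul_nonneg hB (by positivity : (0 : ℝ) ≤ 3 * l + 6 * k + 45)]

lemma summable_natCast_add_one_mul_c_succ (k : ℕ) :
    Summable fun l : ℕ => ((l : ℝ) + 1) * c (l + 1) k := by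
  have hgeom : Summable fun l : ℕ => ((l : ℝ) + 1) * (3 / 4) ^ l := by
    have h₁ := summable_pow_mul_geometric_of_norm_lt_one 1 (r := (3 / 4 : ℝ)) (by norm_num)
    have h₂ := summable_geometric_of_lt_one (r := (3 / 4 : ℝ)) (by norm_num) (by norm_num)
    exact (h₁.add h₂).congr fun l => by ring
  refine Summable.of_nonneg_of_le (fun l => mul_nonneg (by positivity) (c_nonneg _ _))
    (fun l => ?_) (hgeom.mul_left (3 ^ k))
  calc ((l : ℝ) + 1) * c (l + 1) k ≤ ((l : ℝ) + 1) * (3 ^ k * (3 / 4) ^ l) := by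
        gcongr; exact c_succ_le k l
    _ = 3 ^ k * (((l : ℝ) + 1) * (3 / 4) ^ l) := by ring

lemma summable_natCast_add_two_mul_c_add_two (k : ℕ) :
    Summable fun l : ℕ => ((l : ℝ) + 2) * c (l + 2) k :=
  ((summable_nat_add_iff 1).2 (summable_natCast_add_one_mul_c_succ k)).congr fun l => by
    push_cast; ring_nf

lemma summable_c_add_two (k : ℕ) : Summable fun l : ℕ => c (l + 2) k :=
  (summable_natCast_add_two_mul_c_add_two k).of_nonneg_of_le (fun l => c_nonneg _ _)
    fun l => le_mul_of_one_le_left (c_nonneg _ _) (by linarith [l.cast_nonneg (α := ℝ)])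

noncomputable def tailSum (k : ℕ) : ℝ := ∑' l : ℕ, c (l + 2) k

noncomputable def tailMoment (k : ℕ) : ℝ := ∑' l : ℕ, ((l : ℝ) + 2) * c (l + 2) k

lemma hasSum_tailSum (k : ℕ) : HasSum (fun l : ℕ => c (l + 2) k) (tailSum k) :=
  (summable_c_add_two k).hasSum

lemma hasSum_tailMoment (k : ℕ) :
    HasSum (fun l : ℕ => ((l : ℝ) + 2) * c (l + 2) k) (tailMoment k) :=
  (summable_natCast_add_two_mul_c_add_two k).hasSum

lemma hasSum_natCast_add_one_mul_c_succ (k : ℕ) :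
    HasSum (fun l : ℕ => ((l : ℝ) + 1) * c (l + 1) k) (c 1 k + tailMoment k) := by
  simpa using HasSum.zero_add (f := fun l : ℕ => ((l : ℝ) + 1) * c (l + 1) k)
    ((hasSum_tailMoment k).congr_fun fun l => by push_cast; ring_nf)

lemma tailMoment_succ_add (k : ℕ) :
    tailMoment (k + 1) + ((k : ℝ) + 3) * tailSum (k + 1) =
      k * tailSum k + tailMoment k + c 1 (k + 1) := by
  have hL := ((hasSum_tailMoment (k + 1)).mul_left 2).add
    ((hasSum_tailSum (k + 1)).mul_left ((k : ℝ) + 3))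
  have hR := ((hasSum_tailMoment k).add ((hasSum_tailSum k).mul_left (k : ℝ))).add
    (hasSum_natCast_add_one_mul_c_succ (k + 1))
  have hfun : ∀ l : ℕ,
      2 * (((l : ℝ) + 2) * c (l + 2) (k + 1)) + ((k : ℝ) + 3) * c (l + 2) (k + 1) =
        ((l : ℝ) + 2) * c (l + 2) k + k * c (l + 2) k + ((l : ℝ) + 1) * c (l + 1) (k + 1) := by
    intro l
    linear_combination mul_c_add_two_succ l k
  linarith [hL.unique (hR.congr_fun hfun)]

lemma tailSum_tailMoment_telescope (k : ℕ) :
    (k : ℝ) * (k + 1) * (k + 2) * tailSum k + ((k : ℝ) + 1) * (k + 2) * tailMoment k =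
      ∑ s ∈ Finset.Icc 1 k, (s : ℝ) * (s + 1) * c 1 s +
        2 * ∑ s ∈ Finset.Icc 1 k, ((s : ℝ) + 1) * tailMoment s := by
  induction k with
  | zero => simp [tailMoment, c_zero_right]
  | succ k ih =>
    rw [Finset.sum_Icc_succ_top (by omega), Finset.sum_Icc_succ_top (by omega)]
    push_cast
    linear_combination ih + ((k : ℝ) + 1) * (k + 2) * tailMoment_succ_add k

lemma hasSum_natCast_add_two_mul_sum_c (S : Finset ℕ) (w : ℕ → ℝ) :
    HasSum (fun l : ℕ => ((l : ℝ) + 2) * ∑ s ∈ S, w s * c (l + 2) s)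
      (∑ s ∈ S, w s * tailMoment s) := by
  simp_rw [Finset.mul_sum, mul_left_comm]
  exact hasSum_sum fun s _ => (hasSum_tailMoment s).mul_left (w s)

/-- For every `k ≥ 1`, with `x_k = ∑_{l=2}^∞ c(l,k)`, all series below converge and
`x_k = (1/(k(k+1)(k+2)))·∑_{s=1}^k s(s+1)c(1,s)
     + (2/(k(k+1)(k+2)))·∑_{l=2}^∞ l·(∑_{s=1}^k (s+1)c(l,s)) − (1/k)·∑_{l=2}^∞ l·c(l,k)`. -/
theorem x_identity :
    ∀ k : ℕ, 1 ≤ k →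
      Summable (fun l : ℕ => c (l + 2) k) ∧
      Summable (fun l : ℕ => ((l : ℝ) + 2) * ∑ s ∈ Finset.Icc 1 k, ((s : ℝ) + 1) * c (l + 2) s) ∧
      Summable (fun l : ℕ => ((l : ℝ) + 2) * c (l + 2) k) ∧
      (∑' l : ℕ, c (l + 2) k) =
        (1 / ((k : ℝ) * ((k : ℝ) + 1) * ((k : ℝ) + 2))) *
            (∑ s ∈ Finset.Icc 1 k, (s : ℝ) * ((s : ℝ) + 1) * c 1 s) +
          (2 / ((k : ℝ) * ((k : ℝ) + 1) * ((k : ℝ) + 2))) *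
            (∑' l : ℕ, ((l : ℝ) + 2) * ∑ s ∈ Finset.Icc 1 k, ((s : ℝ) + 1) * c (l + 2) s) -
          (1 / (k : ℝ)) * ∑' l : ℕ, ((l : ℝ) + 2) * c (l + 2) k := by
  intro k hk
  have hweighted := hasSum_natCast_add_two_mul_sum_c (Finset.Icc 1 k) fun s => (s : ℝ) + 1
  refine ⟨summable_c_add_two k, hweighted.summable, summable_natCast_add_two_mul_c_add_two k, ?_⟩
  rw [hweighted.tsum_eq, (hasSum_tailSum k).tsum_eq, (hasSum_tailMoment k).tsum_eq]
  have hk₀ : (k : ℝ) ≠ 0 := Nat.cast_ne_zero.2 (by omega)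
  field_simp
  linear_combination tailSum_tailMoment_telescope k
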